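/- Define α_{k₁,k₂}^{m₁,m₂} = (-1)^{k₂-m₂}(h/2)^{k₁+k₂-m₁-m₂} D_{k₁,k₂}^{m₁,m₂}(b_{k₁,k₂}^{m₁,m₂} - b_{k₁-1,k₂-1}^{m₁,m₂}) with D_{k₁,k₂}^{m₁,m₂} = [ (j₁-m₁)!(j₁+k₁)!(j₂-m₂)!(j₂+k₂)! / ((j₁+m₁)!(j₁-k₁)!(j₂+m₂)!(j₂-k₂)!) ]^{1/2} and b_{k₁,k₂}^{m₁,m₂} = C(m₁+k₁, k₂-m₂)·C(m₂+k₂, k₁-m₁). Then the orthogonality relation Σ_{k₁,k₂} α_{k₁,k₂}^{m₁,m₂} α_{-k₁,-k₂}^{-n₁,-n₂} = δ_{m₁,n₁} δ_{m₂,n₂} holds. -/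

import Mathlib

open Finset

/-- Generalized binomial coefficient `C(z,w) = z(z-1)⋯(z-w+1)/w!` for integer `z`,
vanishing for `w < 0`. -/
noncomputable def gchoose (z w : ℤ) : ℝ :=
  if 0 ≤ w then (∏ i ∈ Finset.range w.toNat, ((z : ℝ) - i)) / (w.toNat).factorial else 0

/-- The factor `D_{k₁,k₂}^{m₁,m₂}`.  Throughout, an index `k ∈ {-j,…,j}` is encoded by the
natural number (given here as an integer) `j + k ∈ {0,…,2j}`, and `J = 2j`; thus `μᵢ = jᵢ+mᵢ`
and `aᵢ = jᵢ+kᵢ`. -/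
noncomputable def Dcoef (J₁ J₂ : ℕ) (μ₁ μ₂ a₁ a₂ : ℤ) : ℝ :=
  Real.sqrt
    ((((J₁ : ℤ) - μ₁).toNat.factorial * a₁.toNat.factorial *
        ((J₂ : ℤ) - μ₂).toNat.factorial * a₂.toNat.factorial : ℝ) /
      (μ₁.toNat.factorial * ((J₁ : ℤ) - a₁).toNat.factorial *
        μ₂.toNat.factorial * ((J₂ : ℤ) - a₂).toNat.factorial : ℝ))

/-- The factor `b_{k₁,k₂}^{m₁,m₂} = C(m₁+k₁, k₂-m₂)·C(m₂+k₂, k₁-m₁)` in the encoded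
variables: `m₁+k₁ = μ₁+a₁-J₁`, `k₂-m₂ = a₂-μ₂`, etc. -/
noncomputable def bcoef (J₁ J₂ : ℕ) (μ₁ μ₂ a₁ a₂ : ℤ) : ℝ :=
  gchoose (μ₁ + a₁ - J₁) (a₂ - μ₂) * gchoose (μ₂ + a₂ - J₂) (a₁ - μ₁)

/-- The coefficient `α_{k₁,k₂}^{m₁,m₂}` of `U_h(sl(2))`, in encoded variables (`μᵢ = jᵢ+mᵢ`,
`aᵢ = jᵢ+kᵢ`, `Jᵢ = 2jᵢ`); it vanishes outside the range `mᵢ ≤ kᵢ ≤ jᵢ`, `mᵢ ≥ -jᵢ`. -/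
noncomputable def alphac (h : ℝ) (J₁ J₂ : ℕ) (μ₁ μ₂ a₁ a₂ : ℤ) : ℝ :=
  if 0 ≤ μ₁ ∧ μ₁ ≤ a₁ ∧ a₁ ≤ J₁ ∧ 0 ≤ μ₂ ∧ μ₂ ≤ a₂ ∧ a₂ ≤ J₂ then
    (-1 : ℝ) ^ (a₂ - μ₂).toNat * (h / 2) ^ (a₁ + a₂ - μ₁ - μ₂).toNat *
      Dcoef J₁ J₂ μ₁ μ₂ a₁ a₂ *
      (bcoef J₁ J₂ μ₁ μ₂ a₁ a₂ - bcoef J₁ J₂ μ₁ μ₂ (a₁ - 1) (a₂ - 1))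
  else 0

/-! Write `b_k^m = c_{a,b}(k - m)` with `c_{a,b}(t₁,t₂) = C(a+t₁,t₂) C(b+t₂,t₁)` and
`(a,b) = 2m`, and let `F_{a,b} = ∑ c_{a,b}(t) x^t₁ y^t₂`. Pascal's rule gives
`F_{a+1,b} = F_{a,b} + y F_{a,b+1}` and `F_{a,b+1} = F_{a,b} + x F_{a+1,b}`, so the defect
`F_{a+1,b} F_{a',b'} - F_{a,b} F_{a'+1,b'}` equals `xy` times itself and vanishes. Hence
`F_{a,b} F_{a',b'} = F_{0,0} F_{a+a',b+b'}` with `F_{0,0} = (1 - xy)⁻¹`, and the series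
`E_{a,b} = (1 - xy) F_{a,b}` of differences `b_k - b_{k-1}` is multiplicative in `(a,b)`.
Along the sum the factors `(-1)^…`, `(h/2)^…` and `D` combine to a constant, so the sum is the
coefficient of `x^(n₁-m₁) y^(n₂-m₂)` in `E_{2m} E_{-2n} = E_{2m-2n}`, which upper negation of the
binomial coefficients evaluates to `δ_{m,n}`. -/

open PowerSeries

lemma gchoose_natCast_right (z : ℤ) (k : ℕ) : gchoose z k = Ring.choose z k := by
  have h := Ring.descPochhammer_eq_factorial_smul_choose z k
  rw [← Polynomial.eval_eq_smeval] at h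
  rw [gchoose, if_pos k.cast_nonneg, Int.toNat_natCast, ← descPochhammer_eval_eq_prod_range,
    ← descPochhammer_eval_cast, h, nsmul_eq_mul, Int.cast_mul, Int.cast_natCast,
    mul_div_cancel_left₀ _ (by positivity)]

lemma gchoose_of_neg (z : ℤ) {w : ℤ} (hw : w < 0) : gchoose z w = 0 := by
  simp [gchoose, not_le.2 hw]

lemma gchoose_zero_right (z : ℤ) : gchoose z 0 = 1 := by simp [gchoose]

lemma gchoose_add_one (z w : ℤ) : gchoose (z + 1) w = gchoose z w + gchoose z (w - 1) := by
  rcases lt_or_ge w 0 with hw | hw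
  · simp [gchoose_of_neg, hw, show w - 1 < 0 by omega]
  lift w to ℕ using hw
  cases w with
  | zero => simp [gchoose_zero_right, gchoose_of_neg]
  | succ k =>
    rw [show ((k + 1 : ℕ) : ℤ) - 1 = k by push_cast; ring, gchoose_natCast_right,
      gchoose_natCast_right, gchoose_natCast_right, Ring.choose_succ_succ]
    push_cast; ring

lemma gchoose_natCast_natCast (n k : ℕ) : gchoose n k = n.choose k := by
  rw [gchoose_natCast_right, Ring.choose_natCast]; norm_cast

lemma gchoose_neg_natCast (m k : ℕ) :
    gchoose (-(m + 1 : ℕ)) k = (-1) ^ k * (m + k).choose k := by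
  rw [gchoose_natCast_right, Ring.choose_neg, Units.smul_def, smul_eq_mul, Int.cast_mul,
    Int.cast_negOnePow]
  push_cast
  rw [show (m : ℤ) + 1 + k - 1 = ((m + k : ℕ) : ℤ) by push_cast; ring, Ring.choose_natCast]
  simp

lemma apply_eq_apply_zero_add {α : Type*} (g : ℤ → ℤ → α)
    (h : ∀ a a', g (a + 1) a' = g a (a' + 1)) (a a' : ℤ) : g a a' = g 0 (a + a') := by
  induction a using Int.induction_on generalizing a' with
  | zero => rw [zero_add]
  | succ i ih => rw [h, ih, add_right_comm, add_assoc]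
  | pred i ih => rw [← sub_add_cancel a' 1, ← h, sub_add_cancel, ih]; ring_nf

section Bivariate

variable {R : Type*} [CommRing R]

/-- The series `∑ f t₁ t₂ x^t₁ y^t₂`, with `x = X` the outer and `y = C X` the inner
variable. -/
noncomputable def bivariate (f : ℤ → ℤ → R) : PowerSeries (PowerSeries R) :=
  mk fun t₁ => mk fun t₂ => f t₁ t₂

@[simp]
lemma coeff_coeff_bivariate (f : ℤ → ℤ → R) (t₁ t₂ : ℕ) :
    coeff t₂ (coeff t₁ (bivariate f)) = f t₁ t₂ := by
  simp [bivariate]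

lemma bivariate_add (f g : ℤ → ℤ → R) :
    bivariate f + bivariate g = bivariate fun t₁ t₂ => f t₁ t₂ + g t₁ t₂ := by
  ext t₁ t₂; simp

lemma bivariate_sub (f g : ℤ → ℤ → R) :
    bivariate f - bivariate g = bivariate fun t₁ t₂ => f t₁ t₂ - g t₁ t₂ := by
  ext t₁ t₂; simp

lemma X_mul_bivariate {f : ℤ → ℤ → R} (hf : ∀ t₂, f (-1) t₂ = 0) :
    X * bivariate f = bivariate fun t₁ t₂ => f (t₁ - 1) t₂ := by
  ext t₁ t₂
  cases t₁ with
  | zero =>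
    simp only [coeff_zero_X_mul, map_zero, coeff_coeff_bivariate, Nat.cast_zero, zero_sub, hf]
  | succ t₁ => simp [coeff_succ_X_mul]

lemma C_X_mul_bivariate {f : ℤ → ℤ → R} (hf : ∀ t₁, f t₁ (-1) = 0) :
    C X * bivariate f = bivariate fun t₁ t₂ => f t₁ (t₂ - 1) := by
  ext t₁ t₂
  cases t₂ with
  | zero =>
    simp only [coeff_C_mul, coeff_zero_X_mul, coeff_coeff_bivariate, Nat.cast_zero, zero_sub, hf]
  | succ t₂ => simp [coeff_succ_X_mul]

lemma coeff_coeff_mul (F G : PowerSeries (PowerSeries R)) (n₁ n₂ : ℕ) :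
    coeff n₂ (coeff n₁ (F * G)) = ∑ t₁ ∈ range (n₁ + 1), ∑ t₂ ∈ range (n₂ + 1),
      coeff t₂ (coeff t₁ F) * coeff (n₂ - t₂) (coeff (n₁ - t₁) G) := by
  simp only [coeff_mul, Finset.Nat.sum_antidiagonal_eq_sum_range_succ
    (fun i j => coeff i F * coeff j G), map_sum]
  refine sum_congr rfl fun t₁ _ => ?_
  exact Finset.Nat.sum_antidiagonal_eq_sum_range_succ
    (fun i j => coeff i (coeff t₁ F) * coeff j (coeff (n₁ - t₁) G)) n₂

lemma one_sub_X_mul_C_X_ne_zero [Nontrivial R] :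
    (1 - X * C X : PowerSeries (PowerSeries R)) ≠ 0 := by
  intro h
  simpa using congrArg (fun F => constantCoeff (constantCoeff F)) h

end Bivariate

noncomputable def chooseProd (a b t₁ t₂ : ℤ) : ℝ := gchoose (a + t₁) t₂ * gchoose (b + t₂) t₁

lemma chooseProd_of_neg_left (a b : ℤ) {t₁ : ℤ} (h : t₁ < 0) (t₂ : ℤ) :
    chooseProd a b t₁ t₂ = 0 := by
  rw [chooseProd, gchoose_of_neg _ h, mul_zero]

lemma chooseProd_of_neg_right (a b t₁ : ℤ) {t₂ : ℤ} (h : t₂ < 0) :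
    chooseProd a b t₁ t₂ = 0 := by
  rw [chooseProd, gchoose_of_neg _ h, zero_mul]

lemma chooseProd_add_one_left (a b t₁ t₂ : ℤ) :
    chooseProd (a + 1) b t₁ t₂ = chooseProd a b t₁ t₂ + chooseProd a (b + 1) t₁ (t₂ - 1) := by
  simp only [chooseProd]
  rw [add_right_comm, gchoose_add_one, show b + 1 + (t₂ - 1) = b + t₂ by ring, add_mul]

lemma chooseProd_add_one_right (a b t₁ t₂ : ℤ) :
    chooseProd a (b + 1) t₁ t₂ = chooseProd a b t₁ t₂ + chooseProd (a + 1) b (t₁ - 1) t₂ := by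
  simp only [chooseProd]
  rw [add_right_comm b, gchoose_add_one, show a + 1 + (t₁ - 1) = a + t₁ by ring, mul_add]

lemma chooseProd_zero_zero (t₁ t₂ : ℕ) : chooseProd 0 0 t₁ t₂ = if t₁ = t₂ then 1 else 0 := by
  rw [chooseProd, zero_add, zero_add, gchoose_natCast_natCast, gchoose_natCast_natCast]
  rcases lt_trichotomy t₁ t₂ with h | rfl | h
  · simp [Nat.choose_eq_zero_of_lt h, h.ne]
  · simp
  · simp [Nat.choose_eq_zero_of_lt h, h.ne']

noncomputable def chooseSeries (a b : ℤ) : PowerSeries (PowerSeries ℝ) :=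
  bivariate (chooseProd a b)

lemma chooseSeries_add_one_left (a b : ℤ) :
    chooseSeries (a + 1) b = chooseSeries a b + C X * chooseSeries a (b + 1) := by
  rw [chooseSeries, chooseSeries, chooseSeries,
    C_X_mul_bivariate fun t₁ => chooseProd_of_neg_right _ _ t₁ (by norm_num), bivariate_add]
  exact congrArg bivariate (funext₂ (chooseProd_add_one_left a b))

lemma chooseSeries_add_one_right (a b : ℤ) :
    chooseSeries a (b + 1) = chooseSeries a b + X * chooseSeries (a + 1) b := by
  rw [chooseSeries, chooseSeries, chooseSeries,
    X_mul_bivariate fun t₂ => chooseProd_of_neg_left _ _ (by norm_num) t₂, bivariate_add]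
  exact congrArg bivariate (funext₂ (chooseProd_add_one_right a b))

lemma chooseSeries_shift_mul (a b a' b' : ℤ) :
    chooseSeries (a + 1) b * chooseSeries a' b' = chooseSeries a b * chooseSeries (a' + 1) b' ∧
    chooseSeries a (b + 1) * chooseSeries a' b' = chooseSeries a b * chooseSeries a' (b' + 1) := by
  set P :=
    chooseSeries (a + 1) b * chooseSeries a' b' - chooseSeries a b * chooseSeries (a' + 1) b'
  set Q :=
    chooseSeries a (b + 1) * chooseSeries a' b' - chooseSeries a b * chooseSeries a' (b' + 1)
  have hP : P = C X * Q := by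
    simp only [P, Q, chooseSeries_add_one_left]; ring
  have hQ : Q = X * P := by
    simp only [P, Q, chooseSeries_add_one_right]; ring
  have hP0 : P = 0 := by
    have : (1 - X * C X) * P = 0 := by linear_combination hP + C X * hQ
    exact (mul_eq_zero.1 this).resolve_left one_sub_X_mul_C_X_ne_zero
  rw [hP0, mul_zero] at hQ
  exact ⟨sub_eq_zero.1 hP0, sub_eq_zero.1 hQ⟩

lemma chooseSeries_mul_chooseSeries (a b a' b' : ℤ) :
    chooseSeries a b * chooseSeries a' b' = chooseSeries 0 0 * chooseSeries (a + a') (b + b') :=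
  calc chooseSeries a b * chooseSeries a' b' = chooseSeries 0 b * chooseSeries (a + a') b' :=
        apply_eq_apply_zero_add (fun a a' => chooseSeries a b * chooseSeries a' b')
          (fun a a' => (chooseSeries_shift_mul a b a' b').1) a a'
    _ = chooseSeries 0 0 * chooseSeries (a + a') (b + b') :=
        apply_eq_apply_zero_add (fun b b' => chooseSeries 0 b * chooseSeries (a + a') b')
          (fun b b' => (chooseSeries_shift_mul 0 b (a + a') b').2) b b'

noncomputable def diffSeries (a b : ℤ) : PowerSeries (PowerSeries ℝ) :=
  (1 - X * C X) * chooseSeries a b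

lemma coeff_coeff_diffSeries (a b : ℤ) (t₁ t₂ : ℕ) :
    coeff t₂ (coeff t₁ (diffSeries a b))
      = chooseProd a b t₁ t₂ - chooseProd a b (t₁ - 1) (t₂ - 1) := by
  rw [diffSeries, chooseSeries, sub_mul, one_mul, mul_assoc,
    C_X_mul_bivariate fun t₁ => chooseProd_of_neg_right _ _ t₁ (by norm_num),
    X_mul_bivariate (f := fun t₁ t₂ => chooseProd a b t₁ (t₂ - 1))
      fun t₂ => chooseProd_of_neg_left _ _ (by norm_num) _, bivariate_sub,
    coeff_coeff_bivariate]

lemma diffSeries_zero_zero : diffSeries 0 0 = 1 := by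
  ext t₁ t₂
  rw [coeff_coeff_diffSeries, coeff_one, chooseProd_zero_zero]
  cases t₁ with
  | zero =>
    rw [Nat.cast_zero, zero_sub, chooseProd_of_neg_left _ _ (by norm_num : (-1 : ℤ) < 0)]
    cases t₂ <;> simp
  | succ t₁ =>
    cases t₂ with
    | zero =>
      rw [Nat.cast_zero, zero_sub, chooseProd_of_neg_right _ _ _ (by norm_num : (-1 : ℤ) < 0)]
      simp
    | succ t₂ =>
      rw [Nat.cast_succ, Nat.cast_succ, add_sub_cancel_right, add_sub_cancel_right,
        chooseProd_zero_zero]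
      simp

lemma diffSeries_mul_diffSeries (a b a' b' : ℤ) :
    diffSeries a b * diffSeries a' b' = diffSeries (a + a') (b + b') := by
  calc diffSeries a b * diffSeries a' b'
      = (1 - X * C X) * ((1 - X * C X) * chooseSeries 0 0) * chooseSeries (a + a') (b + b') := by
        rw [diffSeries, diffSeries, mul_mul_mul_comm, chooseSeries_mul_chooseSeries]; ring
    _ = diffSeries (a + a') (b + b') := by
        rw [← diffSeries, diffSeries_zero_zero, mul_one, diffSeries]

lemma coeff_coeff_diffSeries_neg_two_mul (n₁ n₂ : ℕ) :
    coeff n₂ (coeff n₁ (diffSeries (-2 * n₁) (-2 * n₂))) = if n₁ = 0 ∧ n₂ = 0 then 1 else 0 := by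
  rw [coeff_coeff_diffSeries]
  rcases n₁ with _ | p <;> rcases n₂ with _ | q
  · simp [chooseProd, gchoose_zero_right, gchoose_of_neg]
  · simpa [chooseProd, gchoose_zero_right, gchoose_of_neg] using gchoose_natCast_natCast 0 (q + 1)
  · simpa [chooseProd, gchoose_zero_right, gchoose_of_neg] using gchoose_natCast_natCast 0 (p + 1)
  · have e₁ : chooseProd (-2 * ↑(p + 1)) (-2 * ↑(q + 1)) ↑(p + 1) ↑(q + 1)
        = gchoose (-((p + 1 : ℕ) : ℤ)) (q + 1 : ℕ) * gchoose (-((q + 1 : ℕ) : ℤ)) (p + 1 : ℕ) := by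
      simp only [chooseProd]; congr 2 <;> push_cast <;> ring
    have e₂ : chooseProd (-2 * ↑(p + 1)) (-2 * ↑(q + 1)) (↑(p + 1) - 1) (↑(q + 1) - 1)
        = gchoose (-((p + 1 + 1 : ℕ) : ℤ)) q * gchoose (-((q + 1 + 1 : ℕ) : ℤ)) p := by
      simp only [chooseProd]; congr 2 <;> push_cast <;> ring
    -- by upper negation both products are `(-1)^(p+q) C(p+q+1,p) C(p+q+1,q)`
    rw [e₁, e₂, gchoose_neg_natCast, gchoose_neg_natCast, gchoose_neg_natCast,
      gchoose_neg_natCast, if_neg (by omega),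
      show (p + (q + 1)).choose (q + 1) = (q + 1 + p).choose p by
        rw [add_comm p, Nat.choose_symm_add],
      show (q + (p + 1)).choose (p + 1) = (p + 1 + q).choose q by
        rw [add_comm q, Nat.choose_symm_add]]
    ring

section Reindex

variable {M : Type*} [AddCommMonoid M]

lemma sum_Icc_eq_sum_range {f : ℤ → M} {l u μ : ℤ} {n : ℕ} (hl : l ≤ μ) (hu : μ + n ≤ u)
    (hf : ∀ a, f a ≠ 0 → μ ≤ a ∧ a ≤ μ + n) :
    ∑ a ∈ Icc l u, f a = ∑ t ∈ range (n + 1), f (μ + t) := by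
  rw [← sum_subset (Icc_subset_Icc hl hu) fun a _ ha =>
    not_not.1 fun hne => ha (mem_Icc.2 (hf a hne))]
  refine sum_nbij' (fun a => (a - μ).toNat) (fun t => μ + t) ?_ ?_ ?_ ?_ ?_ <;>
    intro a ha <;> simp only [mem_Icc, mem_range] at ha ⊢ <;> first | omega | (congr; omega)

lemma sum_Icc_sum_Icc_eq_sum_range_sum_range {f : ℤ → ℤ → M} {l₁ u₁ l₂ u₂ μ₁ μ₂ : ℤ}
    {n₁ n₂ : ℕ}
    (hl₁ : l₁ ≤ μ₁) (hu₁ : μ₁ + n₁ ≤ u₁) (hl₂ : l₂ ≤ μ₂) (hu₂ : μ₂ + n₂ ≤ u₂)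
    (hf : ∀ a₁ a₂, f a₁ a₂ ≠ 0 → μ₁ ≤ a₁ ∧ a₁ ≤ μ₁ + n₁ ∧ μ₂ ≤ a₂ ∧ a₂ ≤ μ₂ + n₂) :
    ∑ a₁ ∈ Icc l₁ u₁, ∑ a₂ ∈ Icc l₂ u₂, f a₁ a₂
      = ∑ t₁ ∈ range (n₁ + 1), ∑ t₂ ∈ range (n₂ + 1), f (μ₁ + t₁) (μ₂ + t₂) := by
  rw [sum_Icc_eq_sum_range hl₁ hu₁ fun a₁ hne => ?_]
  · exact sum_congr rfl fun t₁ _ =>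
      sum_Icc_eq_sum_range hl₂ hu₂ fun a₂ hne => (hf _ a₂ hne).2.2
  · obtain ⟨a₂, -, ha₂⟩ := exists_ne_zero_of_sum_ne_zero hne
    exact ⟨(hf a₁ a₂ ha₂).1, (hf a₁ a₂ ha₂).2.1⟩

end Reindex

lemma bcoef_eq_chooseProd (J₁ J₂ : ℕ) (μ₁ μ₂ a₁ a₂ : ℤ) :
    bcoef J₁ J₂ μ₁ μ₂ a₁ a₂ = chooseProd (2 * μ₁ - J₁) (2 * μ₂ - J₂) (a₁ - μ₁) (a₂ - μ₂) := by
  simp only [bcoef, chooseProd]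
  congr 2 <;> ring

lemma Dcoef_mul_Dcoef (J₁ J₂ : ℕ) (μ₁ μ₂ ν₁ ν₂ a₁ a₂ : ℤ) :
    Dcoef J₁ J₂ μ₁ μ₂ a₁ a₂ * Dcoef J₁ J₂ (J₁ - ν₁) (J₂ - ν₂) (J₁ - a₁) (J₂ - a₂)
      = Dcoef J₁ J₂ μ₁ μ₂ ν₁ ν₂ := by
  unfold Dcoef
  rw [← Real.sqrt_mul (by positivity), sub_sub_cancel, sub_sub_cancel, sub_sub_cancel,
    sub_sub_cancel]
  congr 1
  field_simp

lemma Dcoef_self (J₁ J₂ : ℕ) (μ₁ μ₂ : ℤ) : Dcoef J₁ J₂ μ₁ μ₂ μ₁ μ₂ = 1 := by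
  unfold Dcoef
  rw [(div_eq_one_iff_eq (by positivity)).2 (by ring), Real.sqrt_one]

lemma le_of_alphac_ne_zero {h : ℝ} {J₁ J₂ : ℕ} {μ₁ μ₂ a₁ a₂ : ℤ}
    (hne : alphac h J₁ J₂ μ₁ μ₂ a₁ a₂ ≠ 0) : μ₁ ≤ a₁ ∧ μ₂ ≤ a₂ := by
  unfold alphac at hne
  split_ifs at hne with hc
  · exact ⟨hc.2.1, hc.2.2.2.2.1⟩
  · exact absurd rfl hne

lemma alphac_of_eq_add (h : ℝ) (J₁ J₂ : ℕ) {μ₁ μ₂ a₁ a₂ : ℤ} {t₁ t₂ : ℕ}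
    (hμ₁ : 0 ≤ μ₁) (hμ₂ : 0 ≤ μ₂) (ha₁ : a₁ ≤ J₁) (ha₂ : a₂ ≤ J₂)
    (ht₁ : a₁ = μ₁ + t₁) (ht₂ : a₂ = μ₂ + t₂) :
    alphac h J₁ J₂ μ₁ μ₂ a₁ a₂ = (-1) ^ t₂ * (h / 2) ^ (t₁ + t₂) * Dcoef J₁ J₂ μ₁ μ₂ a₁ a₂ *
      coeff t₂ (coeff t₁ (diffSeries (2 * μ₁ - J₁) (2 * μ₂ - J₂))) := by
  subst ht₁ ht₂
  rw [alphac, if_pos ⟨hμ₁, by omega, ha₁, hμ₂, by omega, ha₂⟩, coeff_coeff_diffSeries,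
    bcoef_eq_chooseProd, bcoef_eq_chooseProd,
    show (μ₂ + t₂ - μ₂).toNat = t₂ by omega,
    show (μ₁ + t₁ + (μ₂ + t₂) - μ₁ - μ₂).toNat = t₁ + t₂ by omega]
  ring_nf

lemma alphac_mul_alphac (h : ℝ) (J₁ J₂ : ℕ) {μ₁ μ₂ : ℤ} {n₁ n₂ t₁ t₂ : ℕ}
    (hμ₁ : 0 ≤ μ₁) (hμ₂ : 0 ≤ μ₂) (hn₁ : μ₁ + n₁ ≤ J₁) (hn₂ : μ₂ + n₂ ≤ J₂)
    (ht₁ : t₁ ≤ n₁) (ht₂ : t₂ ≤ n₂) :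
    alphac h J₁ J₂ μ₁ μ₂ (μ₁ + t₁) (μ₂ + t₂) *
        alphac h J₁ J₂ (J₁ - (μ₁ + n₁)) (J₂ - (μ₂ + n₂)) (J₁ - (μ₁ + t₁)) (J₂ - (μ₂ + t₂))
      = (-1) ^ n₂ * (h / 2) ^ (n₁ + n₂) * Dcoef J₁ J₂ μ₁ μ₂ (μ₁ + n₁) (μ₂ + n₂) *
        (coeff t₂ (coeff t₁ (diffSeries (2 * μ₁ - J₁) (2 * μ₂ - J₂))) *
          coeff (n₂ - t₂) (coeff (n₁ - t₁)
            (diffSeries (2 * (J₁ - (μ₁ + n₁)) - J₁) (2 * (J₂ - (μ₂ + n₂)) - J₂)))) := by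
  rw [alphac_of_eq_add h J₁ J₂ hμ₁ hμ₂ (by omega) (by omega) rfl rfl,
    alphac_of_eq_add h J₁ J₂ (t₁ := n₁ - t₁) (t₂ := n₂ - t₂) (by omega) (by omega) (by omega)
      (by omega) (by omega) (by omega)]
  have hsign : (-1 : ℝ) ^ n₂ = (-1) ^ t₂ * (-1) ^ (n₂ - t₂) := by
    rw [← pow_add, Nat.add_sub_cancel' ht₂]
  have hpow : (h / 2) ^ (n₁ + n₂) = (h / 2) ^ (t₁ + t₂) * (h / 2) ^ (n₁ - t₁ + (n₂ - t₂)) := by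
    rw [← pow_add]; congr 1; omega
  rw [hsign, hpow, ← Dcoef_mul_Dcoef J₁ J₂ μ₁ μ₂ (μ₁ + n₁) (μ₂ + n₂) (μ₁ + t₁) (μ₂ + t₂)]
  ring

theorem alphac_orthogonality_general (h : ℝ) (J₁ J₂ : ℕ) (μ₁ μ₂ ν₁ ν₂ : ℤ)
    (hμ₁ : 0 ≤ μ₁) (hμ₂ : 0 ≤ μ₂)
    (hν₁' : ν₁ ≤ J₁) (hν₂' : ν₂ ≤ J₂) :
    ∑ a₁ ∈ Finset.Icc (0 : ℤ) J₁, ∑ a₂ ∈ Finset.Icc (0 : ℤ) J₂,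
        alphac h J₁ J₂ μ₁ μ₂ a₁ a₂ *
          alphac h J₁ J₂ ((J₁ : ℤ) - ν₁) ((J₂ : ℤ) - ν₂) ((J₁ : ℤ) - a₁) ((J₂ : ℤ) - a₂)
      = if μ₁ = ν₁ ∧ μ₂ = ν₂ then 1 else 0 := by
  have hsupp : ∀ a₁ a₂, alphac h J₁ J₂ μ₁ μ₂ a₁ a₂ *
      alphac h J₁ J₂ (J₁ - ν₁) (J₂ - ν₂) (J₁ - a₁) (J₂ - a₂) ≠ 0 →
        μ₁ ≤ a₁ ∧ a₁ ≤ ν₁ ∧ μ₂ ≤ a₂ ∧ a₂ ≤ ν₂ := by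
    intro a₁ a₂ hne
    have := le_of_alphac_ne_zero (left_ne_zero_of_mul hne)
    have := le_of_alphac_ne_zero (right_ne_zero_of_mul hne)
    omega
  by_cases hle : μ₁ ≤ ν₁ ∧ μ₂ ≤ ν₂
  swap
  · rw [if_neg (by omega)]
    refine sum_eq_zero fun a₁ _ => sum_eq_zero fun a₂ _ => not_not.1 fun hne => ?_
    have := hsupp a₁ a₂ hne
    omega
  obtain ⟨n₁, rfl⟩ := Int.le.dest hle.1
  obtain ⟨n₂, rfl⟩ := Int.le.dest hle.2
  rw [sum_Icc_sum_Icc_eq_sum_range_sum_range hμ₁ hν₁' hμ₂ hν₂' hsupp]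
  rw [sum_congr rfl fun t₁ ht₁ => sum_congr rfl fun t₂ ht₂ =>
    alphac_mul_alphac h J₁ J₂ hμ₁ hμ₂ hν₁' hν₂' (Nat.lt_succ_iff.1 (mem_range.1 ht₁))
      (Nat.lt_succ_iff.1 (mem_range.1 ht₂))]
  simp_rw [← mul_sum]
  rw [← coeff_coeff_mul, diffSeries_mul_diffSeries,
    show 2 * μ₁ - J₁ + (2 * (J₁ - (μ₁ + n₁)) - J₁) = -2 * n₁ by ring,
    show 2 * μ₂ - J₂ + (2 * (J₂ - (μ₂ + n₂)) - J₂) = -2 * n₂ by ring,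
    coeff_coeff_diffSeries_neg_two_mul]
  by_cases hn : n₁ = 0 ∧ n₂ = 0
  · obtain ⟨rfl, rfl⟩ := hn
    simp [Dcoef_self]
  · rw [if_neg hn, if_neg (by omega), mul_zero]

/-- Orthogonality of the `U_h(sl(2))` coefficients:
`Σ_{k₁,k₂} α_{k₁,k₂}^{m₁,m₂} α_{-k₁,-k₂}^{-n₁,-n₂} = δ_{m₁,n₁} δ_{m₂,n₂}`
(an index `-k` is encoded by `j + (-k) = J - a`). -/
theorem alphac_orthogonality (h : ℝ) (J₁ J₂ : ℕ) (μ₁ μ₂ ν₁ ν₂ : ℤ)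
    (hμ₁ : 0 ≤ μ₁) (hμ₁' : μ₁ ≤ J₁) (hμ₂ : 0 ≤ μ₂) (hμ₂' : μ₂ ≤ J₂)
    (hν₁ : 0 ≤ ν₁) (hν₁' : ν₁ ≤ J₁) (hν₂ : 0 ≤ ν₂) (hν₂' : ν₂ ≤ J₂) :
    ∑ a₁ ∈ Finset.Icc (0 : ℤ) J₁, ∑ a₂ ∈ Finset.Icc (0 : ℤ) J₂,
        alphac h J₁ J₂ μ₁ μ₂ a₁ a₂ *
          alphac h J₁ J₂ ((J₁ : ℤ) - ν₁) ((J₂ : ℤ) - ν₂) ((J₁ : ℤ) - a₁) ((J₂ : ℤ) - a₂)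
      = if μ₁ = ν₁ ∧ μ₂ = ν₂ then 1 else 0 :=
  alphac_orthogonality_general h J₁ J₂ μ₁ μ₂ ν₁ ν₂ hμ₁ hμ₂ hν₁' hν₂'
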